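/- Consider the alphabet {a, b}, and for each n let E_n be the event that a word of length n contains two equal disjoint (non-overlapping) factors each of length at least 3·log₂ n. Then under the uniform probability P̃_n on Lyndon words of length n, P̃_n(E_n) = O(n^{−1}) as n → ∞; likewise, under the uniform probability P_n on all words of length n, P_n(E_n) = O(n^{−1}). -/

import Mathlib

open scoped Classical

/-- A Lyndon word: strictly smaller, in lexicographic order, than each of its
proper (nonempty) suffixes. -/
def IsLyndon {α : Type*} [LinearOrder α] (w : List α) : Prop :=
  ∀ i, 0 < i → i < w.length → List.Lex (· < ·) w (w.drop i)

/-- The finite set of Lyndon words of length `n` over a two-letter alphabet. -/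
noncomputable def lyndonWords (q n : ℕ) : Finset (Fin n → Fin q) :=
  Finset.univ.filter fun w => IsLyndon (List.ofFn w)

/-- The word `w` contains two equal, disjoint (non-overlapping) factors, each of
length at least `T`. -/
def TwoEqualDisjointFactors {α : Type*} (w : List α) (T : ℝ) : Prop :=
  ∃ u l₁ l₂ l₃ : List α,
    T ≤ (u.length : ℝ) ∧ w = l₁ ++ u ++ l₂ ++ u ++ l₃

/-!
Put `L = ⌈3 log₂ n⌉`, so that `n³ ≤ 2^L`, and look for two disjoint equal factors of length
exactly `L`. Once their starting positions are fixed, the second copy is determined by the rest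
of the word; a union bound over the at most `n²` pairs of positions shows that at most
`n² 2^(n-L) ≤ 2^n / n` words of length `n` contain such a repeat. This is the bound for `P_n`.

For Lyndon words one gains a factor `n` from rotations. If a word has a repeat, so do all its
rotations except the at most `2L` that cut one of the two copies, and rotations of distinct Lyndon
words of length `n` are distinct words; hence `(n - 2L) · #(Lyndon words with a repeat)` is at
most `2^n / n`. On the other side, a word distinct from all its proper rotations is a rotation of
a Lyndon word (its least rotation). A word fixed by a proper rotation is fixed by one of some
length `d ≤ n/2` and is then determined by its first `d` letters, so there are fewer than
`2^(n/2+1)` such words and `n · #(Lyndon words) ≥ 2^(n-1)`. Dividing gives `P̃_n ≤ 4 / n`.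
-/

open Finset

theorem List.append_lt_append_of_lt_of_length_eq {α : Type*} [LinearOrder α] {a b : List α}
    (h : a < b) (hlen : a.length = b.length) (c d : List α) : a ++ c < b ++ d := by
  induction a generalizing b with
  | nil => cases b <;> simp_all
  | cons x a ih =>
    obtain _ | ⟨y, b⟩ := b
    · simp at hlen
    rcases List.cons_lt_cons_iff.1 h with hxy | ⟨rfl, hab⟩
    · exact List.Lex.rel hxy
    · exact List.Lex.cons (ih hab (by simpa using hlen))

section Lyndon

variable {α : Type*} [LinearOrder α]

theorem IsLyndon.lt_rotate {w : List α} (hw : IsLyndon w) {k : ℕ} (hk₀ : 0 < k)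
    (hk : k < w.length) : w < w.rotate k := by
  rw [List.rotate_eq_drop_append_take hk.le]
  exact (hw k hk₀ hk).append_right _ _

theorem IsLyndon.eq_zero_of_isLyndon_rotate {w : List α} (hw : IsLyndon w) {d : ℕ}
    (hd : d < w.length) (hwd : IsLyndon (w.rotate d)) : d = 0 := by
  by_contra hd₀
  have h₁ : w < w.rotate d := hw.lt_rotate (Nat.pos_of_ne_zero hd₀) hd
  have h₂ : w.rotate d < w := by
    have := hwd.lt_rotate (k := w.length - d) (by omega) (by simp only [List.length_rotate]; omega)
    rwa [List.rotate_rotate, Nat.add_sub_cancel' hd.le, List.rotate_length] at this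
  exact lt_asymm h₁ h₂

theorem IsLyndon.eq_and_eq_of_rotate_eq_rotate {w₁ w₂ : List α} (h₁ : IsLyndon w₁)
    (h₂ : IsLyndon w₂) (hlen : w₁.length = w₂.length) {r₁ r₂ : ℕ} (hr₁ : r₁ < w₁.length)
    (hr₂ : r₂ < w₂.length) (h : w₁.rotate r₁ = w₂.rotate r₂) : w₁ = w₂ ∧ r₁ = r₂ := by
  wlog hle : r₁ ≤ r₂ generalizing w₁ w₂ r₁ r₂
  · obtain ⟨hw, hr⟩ := this h₂ h₁ hlen.symm hr₂ hr₁ h.symm (by omega)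
    exact ⟨hw.symm, hr.symm⟩
  have hw : w₁ = w₂.rotate (r₂ - r₁) := by
    rw [← List.rotate_eq_rotate (n := r₁), h, List.rotate_rotate, Nat.sub_add_cancel hle]
  have hr := h₂.eq_zero_of_isLyndon_rotate (d := r₂ - r₁) (by omega) (hw ▸ h₁)
  rw [hr, List.rotate_zero] at hw
  exact ⟨hw, by omega⟩

theorem isLyndon_of_lt_rotate {v : List α} (hv : ∀ j, 0 < j → j < v.length → v < v.rotate j) :
    IsLyndon v := by
  intro i hi₀ hi
  -- Compare `y` with the prefix `a` of `v` of the same length. If `a = y`, then `v = y ++ b`,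
  -- and `v < b ++ y` (a rotation of `v`) forces `x ≤ b`, contradicting `v < y ++ x`.
  set x := v.take i
  set y := v.drop i
  have hvxy : v = x ++ y := (List.take_append_drop i v).symm
  have hlt : v < y ++ x := List.rotate_eq_drop_append_take hi.le ▸ hv i hi₀ hi
  set a := v.take (v.length - i)
  set b := v.drop (v.length - i)
  have hvab : v = a ++ b := (List.take_append_drop _ v).symm
  have hay : a.length = y.length := by simp [a, y]
  rcases lt_trichotomy a y with hay' | hay' | hya
  · calc v = a ++ b := hvab
      _ < y ++ [] := List.append_lt_append_of_lt_of_length_eq hay' hay _ _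
      _ = y := List.append_nil _
  · exfalso
    rw [hay'] at hvab
    rcases lt_trichotomy x b with hxb | hxb | hbx
    · exact lt_asymm hlt (hvab ▸ List.append_left_lt hxb)
    · rw [hxb, ← hvab] at hlt
      exact lt_irrefl v hlt
    · have hrot : v.rotate y.length = b ++ y := by
        rw [hvab, List.rotate_append_length_eq]
      have hbx' := List.append_lt_append_of_lt_of_length_eq hbx
        (by simp only [b, x, List.length_drop, List.length_take]; omega) y y
      have hy₀ : 0 < y.length := by simp only [y, List.length_drop]; omega
      have hy : y.length < v.length := by simp only [y, List.length_drop]; omega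
      exact lt_asymm (hrot ▸ hv _ hy₀ hy) (hvxy ▸ hbx')
  · have := List.append_lt_append_of_lt_of_length_eq hya hay.symm x b
    exact absurd (hlt.trans (hvab ▸ this)) (lt_irrefl v)

theorem exists_isLyndon_rotate_eq {w : List α} (hw₀ : w ≠ [])
    (hw : ∀ d, 0 < d → d < w.length → w.rotate d ≠ w) :
    ∃ v, IsLyndon v ∧ ∃ k < w.length, v.rotate k = w := by
  set n := w.length
  have hn : 0 < n := List.length_pos_iff.2 hw₀
  obtain ⟨k₀, hk₀, hmin⟩ := (range n).exists_min_image w.rotate ⟨0, by simpa⟩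
  set v := w.rotate k₀
  have hvlen : v.length = n := List.length_rotate ..
  have hvw : v.rotate (n - k₀) = w := by
    rw [List.rotate_rotate, Nat.add_sub_cancel' (mem_range.1 hk₀).le, List.rotate_length]
  have hv_le : ∀ j, v ≤ v.rotate j := fun j => by
    rw [List.rotate_rotate, ← List.rotate_mod]
    exact hmin _ (mem_range.2 (Nat.mod_lt _ hn))
  have hv_ne : ∀ j, 0 < j → j < n → v.rotate j ≠ v := fun j hj₀ hj hvj =>
    hw j hj₀ hj (by rw [← hvw, List.rotate_rotate, add_comm, ← List.rotate_rotate, hvj])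
  refine ⟨v, isLyndon_of_lt_rotate fun j hj₀ hj => ?_, (n - k₀) % n, Nat.mod_lt _ hn, ?_⟩
  · exact lt_of_le_of_ne (hv_le j) (hv_ne j hj₀ (hvlen ▸ hj)).symm
  · simpa [hvlen] using (List.rotate_mod v (n - k₀)).trans hvw

end Lyndon

section DisjointRepeat

variable {α : Type*}

def HasDisjointRepeat (L : ℕ) (w : List α) : Prop :=
  ∃ u l₁ l₂ l₃ : List α, u.length = L ∧ w = l₁ ++ u ++ l₂ ++ u ++ l₃

theorem TwoEqualDisjointFactors.hasDisjointRepeat {w : List α} {T : ℝ}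
    (h : TwoEqualDisjointFactors w T) : HasDisjointRepeat ⌈T⌉₊ w := by
  obtain ⟨u, l₁, l₂, l₃, hT, rfl⟩ := h
  refine ⟨u.take ⌈T⌉₊, l₁, u.drop ⌈T⌉₊ ++ l₂, u.drop ⌈T⌉₊ ++ l₃,
    by simpa using Nat.ceil_le.2 hT, ?_⟩
  conv_lhs => rw [← u.take_append_drop ⌈T⌉₊]
  simp only [List.append_assoc]

theorem HasDisjointRepeat.exists_getElem?_eq {L : ℕ} {w : List α} (h : HasDisjointRepeat L w) :
    ∃ i j, i + L ≤ j ∧ j + L ≤ w.length ∧ ∀ t < L, w[i + t]? = w[j + t]? := by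
  obtain ⟨u, l₁, l₂, l₃, rfl, rfl⟩ := h
  refine ⟨l₁.length, l₁.length + u.length + l₂.length, by omega, ?_, fun t ht => by grind⟩
  simp only [List.length_append]
  omega

theorem hasDisjointRepeat_rotate {u l₁ l₂ l₃ : List α} {k : ℕ}
    (hk : k ≤ l₁.length ∨ l₁.length + u.length ≤ k ∧ k ≤ l₁.length + u.length + l₂.length ∨
      l₁.length + 2 * u.length + l₂.length ≤ k ∧ k ≤ (l₁ ++ u ++ l₂ ++ u ++ l₃).length) :
    HasDisjointRepeat u.length ((l₁ ++ u ++ l₂ ++ u ++ l₃).rotate k) := by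
  simp only [List.length_append] at hk
  rcases hk with hk | ⟨hk₁, hk₂⟩ | ⟨hk₁, hk₂⟩
  · obtain ⟨x, y, rfl, rfl⟩ : ∃ x y, l₁ = x ++ y ∧ x.length = k :=
      ⟨l₁.take k, l₁.drop k, (l₁.take_append_drop k).symm, by simpa⟩
    refine ⟨u, y, l₂, l₃ ++ x, rfl, ?_⟩
    simpa only [List.append_assoc] using
      List.rotate_append_length_eq x (y ++ u ++ l₂ ++ u ++ l₃)
  · obtain ⟨x, y, rfl, rfl⟩ : ∃ x y, l₂ = x ++ y ∧ (l₁ ++ u ++ x).length = k :=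
      ⟨l₂.take _, l₂.drop _, (l₂.take_append_drop (k - (l₁.length + u.length))).symm,
        by simp only [List.length_append, List.length_take]; omega⟩
    refine ⟨u, y, l₃ ++ l₁, x, rfl, ?_⟩
    simpa only [List.append_assoc] using
      List.rotate_append_length_eq (l₁ ++ u ++ x) (y ++ u ++ l₃)
  · obtain ⟨x, y, rfl, rfl⟩ : ∃ x y, l₃ = x ++ y ∧ (l₁ ++ u ++ l₂ ++ u ++ x).length = k :=
      ⟨l₃.take _, l₃.drop _,
        (l₃.take_append_drop (k - (l₁.length + 2 * u.length + l₂.length))).symm,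
        by simp only [List.length_append, List.length_take]; omega⟩
    refine ⟨u, y ++ l₁, l₂, x, rfl, ?_⟩
    simpa only [List.append_assoc] using
      List.rotate_append_length_eq (l₁ ++ u ++ l₂ ++ u ++ x) y

theorem HasDisjointRepeat.length_sub_le_card_rotate {L : ℕ} {w : List α}
    (h : HasDisjointRepeat L w) :
    w.length - 2 * L ≤ #{k ∈ range w.length | HasDisjointRepeat L (w.rotate k)} := by
  obtain ⟨u, l₁, l₂, l₃, rfl, rfl⟩ := h
  set a := l₁.length
  set b := l₁.length + u.length + l₂.length
  have hsub : range (l₁ ++ u ++ l₂ ++ u ++ l₃).length \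
      (Ioo a (a + u.length) ∪ Ioo b (b + u.length)) ⊆
      {k ∈ range (l₁ ++ u ++ l₂ ++ u ++ l₃).length |
        HasDisjointRepeat u.length ((l₁ ++ u ++ l₂ ++ u ++ l₃).rotate k)} := by
    intro k hk
    simp only [mem_sdiff, mem_union, mem_Ioo, mem_range] at hk
    refine mem_filter.2 ⟨mem_range.2 hk.1, hasDisjointRepeat_rotate ?_⟩
    simp only [List.length_append] at hk ⊢
    omega
  refine le_trans ?_ ((le_card_sdiff _ _).trans (card_le_card hsub))
  have := card_union_le (Ioo a (a + u.length)) (Ioo b (b + u.length))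
  simp only [Nat.card_Ioo, card_range] at this ⊢
  omega

end DisjointRepeat

section Rotation

variable {α : Type*} {n : ℕ}

def rotateFn (k : ℕ) (w : Fin n → α) : Fin n → α :=
  fun x => w ⟨(x + k) % n, Nat.mod_lt _ x.pos⟩

theorem ofFn_rotateFn (k : ℕ) (w : Fin n → α) :
    List.ofFn (rotateFn k w) = (List.ofFn w).rotate k :=
  List.ext_getElem (by simp) fun i _ _ => by simp [List.getElem_rotate, rotateFn]

theorem rotateFn_eq_self_iff {k : ℕ} {w : Fin n → α} :
    rotateFn k w = w ↔ (List.ofFn w).rotate k = List.ofFn w := by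
  rw [← ofFn_rotateFn, List.ofFn_inj]

theorem List.exists_ofFn_eq {l : List α} (hl : l.length = n) :
    ∃ w : Fin n → α, List.ofFn w = l := by
  subst hl
  exact ⟨fun i => l[i], List.ofFn_getElem⟩

end Rotation

section Counting

variable {α : Type*} [Fintype α] {n : ℕ}

theorem card_le_card_pow_of_eqOn {ι : Type*} (s : Finset (ι → α)) (B : Finset ι)
    (h : ∀ v ∈ s, ∀ w ∈ s, Set.EqOn v w B → v = w) : #s ≤ Fintype.card α ^ #B :=
  calc #s ≤ #(univ : Finset (B → α)) :=
        card_le_card_of_injOn (fun w b => w b) (by simp) fun v hv w hw hvw =>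
          h v hv w hw fun b hb => congrFun hvw ⟨b, hb⟩
    _ = Fintype.card α ^ #B := by simp

theorem card_getElem?_eq_mul_pow_le {L i j : ℕ} (hij : i + L ≤ j) (hjn : j + L ≤ n) :
    #{w : Fin n → α | ∀ t < L, (List.ofFn w)[i + t]? = (List.ofFn w)[j + t]?} *
      Fintype.card α ^ L ≤ Fintype.card α ^ n := by
  set B := (range n \ Ico j (j + L)).attachFin fun m hm => mem_range.1 (mem_sdiff.1 hm).1
  have hB : #B = n - L := by
    rw [card_attachFin, card_sdiff_of_subset, card_range, Nat.card_Ico]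
    · omega
    · intro m hm
      rw [mem_Ico] at hm
      exact mem_range.2 (by omega)
  refine le_trans (Nat.mul_le_mul_right _ (hB ▸ card_le_card_pow_of_eqOn _ B ?_)) ?_
  · rw [← pow_add, Nat.sub_add_cancel (by omega)]
  intro v hv w hw hvw
  funext x
  by_cases hx : x ∈ B
  · exact hvw hx
  simp only [B, mem_attachFin, mem_sdiff, mem_range, mem_Ico, x.2, true_and, not_not] at hx
  obtain ⟨t, ht, hxt⟩ : ∃ t < L, (x : ℕ) = j + t := ⟨x - j, by omega, by omega⟩
  have hiB : (⟨i + t, by omega⟩ : Fin n) ∈ B := by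
    simp only [B, mem_attachFin, mem_sdiff, mem_range, mem_Ico]
    omega
  have hv := (mem_filter.1 hv).2 t ht
  have hw := (mem_filter.1 hw).2 t ht
  simp only [List.getElem?_ofFn, show i + t < n by omega, show j + t < n by omega,
    dite_true, Option.some.injEq] at hv hw
  rw [show x = ⟨j + t, by omega⟩ from Fin.ext hxt, ← hv, ← hw]
  exact hvw hiB

theorem card_hasDisjointRepeat_mul_pow_le {L : ℕ} (hL : 0 < L) :
    #{w : Fin n → α | HasDisjointRepeat L (List.ofFn w)} * Fintype.card α ^ L ≤
      n ^ 2 * Fintype.card α ^ n := by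
  set P := fun (p : ℕ × ℕ) (w : Fin n → α) =>
    ∀ t < L, (List.ofFn w)[p.1 + t]? = (List.ofFn w)[p.2 + t]?
  set D := {p ∈ range n ×ˢ range n | p.1 + L ≤ p.2 ∧ p.2 + L ≤ n}
  have hsub : ({w | HasDisjointRepeat L (List.ofFn w)} : Finset (Fin n → α)) ⊆
      D.biUnion fun p => {w | P p w} := by
    intro w hw
    obtain ⟨i, j, hij, hjn, h⟩ := (mem_filter.1 hw).2.exists_getElem?_eq
    rw [List.length_ofFn] at hjn
    refine mem_biUnion.2 ⟨(i, j), ?_, mem_filter.2 ⟨mem_univ _, h⟩⟩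
    simp only [D, mem_filter, mem_product, mem_range]
    omega
  calc _ ≤ (∑ p ∈ D, #{w | P p w}) * Fintype.card α ^ L :=
        Nat.mul_le_mul_right _ ((card_le_card hsub).trans card_biUnion_le)
    _ = ∑ p ∈ D, #{w | P p w} * Fintype.card α ^ L := sum_mul ..
    _ ≤ ∑ _p ∈ D, Fintype.card α ^ n := sum_le_sum fun p hp => by
        simp only [D, mem_filter] at hp
        exact card_getElem?_eq_mul_pow_le hp.2.1 hp.2.2
    _ ≤ n ^ 2 * Fintype.card α ^ n := by
        rw [sum_const, smul_eq_mul, sq, ← card_range n, ← card_product]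
        exact Nat.mul_le_mul_right _ (card_filter_le _ _)

theorem card_hasDisjointRepeat_mul_le {L : ℕ} (hL₀ : 0 < L) (hL : n ^ 3 ≤ Fintype.card α ^ L) :
    #{w : Fin n → α | HasDisjointRepeat L (List.ofFn w)} * n ≤ Fintype.card α ^ n := by
  rcases Nat.eq_zero_or_pos n with rfl | hn
  · simp
  refine Nat.le_of_mul_le_mul_right ?_ (pow_pos hn 2)
  calc #{w : Fin n → α | HasDisjointRepeat L (List.ofFn w)} * n * n ^ 2
      = #{w : Fin n → α | HasDisjointRepeat L (List.ofFn w)} * n ^ 3 := by ring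
    _ ≤ #{w : Fin n → α | HasDisjointRepeat L (List.ofFn w)} * Fintype.card α ^ L :=
        Nat.mul_le_mul_left _ hL
    _ ≤ n ^ 2 * Fintype.card α ^ n := card_hasDisjointRepeat_mul_pow_le hL₀
    _ = Fintype.card α ^ n * n ^ 2 := mul_comm ..

theorem card_rotateFn_eq_self_le {d : ℕ} (hd₀ : 0 < d) (hd : d ≤ n) :
    #{w : Fin n → α | rotateFn d w = w} ≤ Fintype.card α ^ d := by
  have hB := card_le_card_pow_of_eqOn {w : Fin n → α | rotateFn d w = w}
    ((range d).attachFin fun m hm => by rw [mem_range] at hm; omega)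
  rw [card_attachFin, card_range] at hB
  refine hB fun v hv w hw hvw => funext fun ⟨x, hx⟩ => ?_
  induction x using Nat.strong_induction_on with
  | _ x ih =>
    by_cases hxd : x < d
    · exact hvw (by simpa using hxd)
    have hshift : ∀ u : Fin n → α, rotateFn d u = u → u ⟨x, hx⟩ = u ⟨x - d, by omega⟩ :=
      fun u hu => by
        conv_rhs => rw [← hu]
        simp only [rotateFn, Nat.sub_add_cancel (not_lt.1 hxd), Nat.mod_eq_of_lt hx]
    rw [hshift v (mem_filter.1 hv).2, hshift w (mem_filter.1 hw).2, ih _ (by omega)]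

theorem card_exists_rotateFn_eq_self_lt (hq : 2 ≤ Fintype.card α) :
    #{w : Fin n → α | ∃ d, 0 < d ∧ d < n ∧ rotateFn d w = w} <
      Fintype.card α ^ (n / 2 + 1) := by
  have hsub : ({w | ∃ d, 0 < d ∧ d < n ∧ rotateFn d w = w} : Finset (Fin n → α)) ⊆
      (Icc 1 (n / 2)).biUnion fun d => {w | rotateFn d w = w} := by
    intro w hw
    obtain ⟨d, hd₀, hdn, hdw⟩ := (mem_filter.1 hw).2
    simp only [mem_biUnion, mem_Icc, mem_filter, mem_univ, true_and]
    by_cases hd : d ≤ n / 2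
    · exact ⟨d, ⟨hd₀, hd⟩, hdw⟩
    -- a word fixed by the rotation of length `d` is also fixed by the one of length `n - d`
    refine ⟨n - d, by omega, rotateFn_eq_self_iff.2 ?_⟩
    have := List.rotate_length (List.ofFn w)
    rw [List.length_ofFn] at this
    conv_lhs => rw [← rotateFn_eq_self_iff.1 hdw]
    rwa [List.rotate_rotate, Nat.add_sub_cancel' hdn.le]
  calc _ ≤ ∑ d ∈ Icc 1 (n / 2), #{w : Fin n → α | rotateFn d w = w} :=
        (card_le_card hsub).trans card_biUnion_le
    _ ≤ ∑ d ∈ Icc 1 (n / 2), Fintype.card α ^ d := sum_le_sum fun d hd => by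
        rw [mem_Icc] at hd
        exact card_rotateFn_eq_self_le (by omega) (by omega)
    _ < Fintype.card α ^ (n / 2 + 1) := Nat.geomSum_lt hq fun d hd => by
        rw [mem_Icc] at hd
        omega

variable [LinearOrder α]

theorem card_not_exists_rotateFn_eq_self_le (hn : 0 < n) :
    #{w : Fin n → α | ¬ ∃ d, 0 < d ∧ d < n ∧ rotateFn d w = w} ≤
      n * #{w : Fin n → α | IsLyndon (List.ofFn w)} := by
  calc _ ≤ #((({w | IsLyndon (List.ofFn w)} : Finset (Fin n → α)) ×ˢ range n).image
          fun p => rotateFn p.2 p.1) := card_le_card ?_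
    _ ≤ _ := card_image_le.trans (by rw [card_product, card_range, mul_comm])
  intro w hw
  have hw := (mem_filter.1 hw).2
  simp only [not_exists, not_and] at hw
  obtain ⟨v, hv, k, hk, hvk⟩ := exists_isLyndon_rotate_eq (w := List.ofFn w)
    (by simp only [ne_eq, List.ofFn_eq_nil_iff]; omega)
    fun d hd₀ hd h => hw d hd₀ (by simpa using hd) (rotateFn_eq_self_iff.2 h)
  obtain ⟨v, rfl⟩ := List.exists_ofFn_eq (n := n) (by simpa using congrArg List.length hvk)
  simp only [mem_image, mem_product, mem_filter, mem_univ, true_and, mem_range]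
  exact ⟨(v, k), ⟨hv, by simpa using hk⟩, List.ofFn_injective (by rw [ofFn_rotateFn, hvk])⟩

theorem pow_le_two_mul_card_isLyndon (hq : 2 ≤ Fintype.card α) (hn : 3 ≤ n) :
    Fintype.card α ^ n ≤ 2 * n * #{w : Fin n → α | IsLyndon (List.ofFn w)} := by
  have hsplit := card_filter_add_card_filter_not (s := univ)
    (p := fun w : Fin n → α => ∃ d, 0 < d ∧ d < n ∧ rotateFn d w = w)
  rw [card_univ, Fintype.card_fun, Fintype.card_fin] at hsplit
  have hnonprim := card_exists_rotateFn_eq_self_lt (n := n) hq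
  have hprim := card_not_exists_rotateFn_eq_self_le (α := α) (by omega : 0 < n)
  have hpow : 2 * Fintype.card α ^ (n / 2 + 1) ≤ Fintype.card α ^ n :=
    calc 2 * Fintype.card α ^ (n / 2 + 1) ≤ Fintype.card α * Fintype.card α ^ (n / 2 + 1) :=
          Nat.mul_le_mul_right _ hq
      _ = Fintype.card α ^ (n / 2 + 2) := by ring
      _ ≤ Fintype.card α ^ n := Nat.pow_le_pow_right (by omega) (by omega)
  rw [mul_assoc]
  omega

theorem card_isLyndon_hasDisjointRepeat_mul_le (L : ℕ) :
    #{w : Fin n → α | IsLyndon (List.ofFn w) ∧ HasDisjointRepeat L (List.ofFn w)} * (n - 2 * L) ≤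
      #{w : Fin n → α | HasDisjointRepeat L (List.ofFn w)} := by
  set S : Finset (Fin n → α) := {w | IsLyndon (List.ofFn w) ∧ HasDisjointRepeat L (List.ofFn w)}
  set G : (Fin n → α) → Finset ℕ :=
    fun w => {k ∈ range n | HasDisjointRepeat L ((List.ofFn w).rotate k)}
  calc #S * (n - 2 * L) = ∑ _w ∈ S, (n - 2 * L) := by rw [sum_const, smul_eq_mul]
    _ ≤ ∑ w ∈ S, #(G w) := sum_le_sum fun w hw => by
        simpa [G] using (mem_filter.1 hw).2.2.length_sub_le_card_rotate
    _ = #(S.sigma G) := (card_sigma ..).symm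
    _ ≤ _ := card_le_card_of_injOn (fun p => rotateFn p.2 p.1) ?_ ?_
  · rintro ⟨w, k⟩ hwk
    simp only [S, G, coe_sigma, Set.mem_sigma_iff, coe_filter, mem_univ, true_and] at hwk
    simpa [ofFn_rotateFn] using hwk.2.2
  · rintro ⟨w₁, k₁⟩ h₁ ⟨w₂, k₂⟩ h₂ h
    simp only [S, G, coe_sigma, Set.mem_sigma_iff, coe_filter, mem_univ, true_and] at h₁ h₂
    have hrot := congrArg List.ofFn h
    simp only [ofFn_rotateFn] at hrot
    obtain ⟨hw, rfl⟩ := h₁.1.1.eq_and_eq_of_rotate_eq_rotate h₂.1.1 (by simp)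
      (by simpa using h₁.2.1) (by simpa using h₂.2.1) hrot
    rw [List.ofFn_injective hw]

theorem card_isLyndon_hasDisjointRepeat_mul_le_four_mul (hq : 2 ≤ Fintype.card α) {L : ℕ}
    (hL₀ : 0 < L) (hL : n ^ 3 ≤ Fintype.card α ^ L) (hLn : 4 * L ≤ n) :
    #{w : Fin n → α | IsLyndon (List.ofFn w) ∧ HasDisjointRepeat L (List.ofFn w)} * n ≤
      4 * #{w : Fin n → α | IsLyndon (List.ofFn w)} := by
  have hrot := card_isLyndon_hasDisjointRepeat_mul_le (α := α) (n := n) L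
  have hrep := card_hasDisjointRepeat_mul_le (α := α) hL₀ hL
  have hlyn := pow_le_two_mul_card_isLyndon (α := α) (n := n) hq (by omega)
  set A := #{w : Fin n → α | IsLyndon (List.ofFn w) ∧ HasDisjointRepeat L (List.ofFn w)}
  set R := #{w : Fin n → α | HasDisjointRepeat L (List.ofFn w)}
  set Y := #{w : Fin n → α | IsLyndon (List.ofFn w)}
  have hAR : A * n ≤ 2 * R :=
    calc A * n ≤ A * (2 * (n - 2 * L)) := Nat.mul_le_mul_left _ (by omega)
      _ = 2 * (A * (n - 2 * L)) := by ring
      _ ≤ 2 * R := Nat.mul_le_mul_left _ hrot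
  refine Nat.le_of_mul_le_mul_right ?_ (by omega : 0 < n)
  calc A * n * n ≤ 2 * R * n := Nat.mul_le_mul_right _ hAR
    _ = 2 * (R * n) := by ring
    _ ≤ 2 * (2 * n * Y) := by omega
    _ = 4 * Y * n := by ring

end Counting

theorem natCeil_three_mul_log_div_log_two (n : ℕ) :
    ⌈3 * (Real.log n / Real.log 2)⌉₊ = Nat.clog 2 (n ^ 3) := by
  rw [Real.log_div_log, ← Nat.cast_ofNat (R := ℝ) (n := 3), ← Real.logb_pow,
    ← Real.natCeil_logb_natCast]
  push_cast
  rfl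

theorem four_mul_clog_two_pow_three_le {n : ℕ} (hn : 128 < n) : 4 * Nat.clog 2 (n ^ 3) ≤ n := by
  set c := Nat.clog 2 n
  have hn_le : n ≤ 2 ^ c := Nat.le_pow_clog one_lt_two n
  have hclog : Nat.clog 2 (n ^ 3) ≤ 3 * c := Nat.clog_le_of_le_pow <| by
    rw [mul_comm, pow_mul]
    exact Nat.pow_le_pow_left hn_le 3
  have hc : 8 ≤ c := by
    by_contra hc
    have := Nat.pow_le_pow_right (n := 2) (by omega) (show c ≤ 7 by omega)
    omega
  have hlt : 2 ^ (c - 1) < n := Nat.pow_pred_clog_lt_self one_lt_two (by omega)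
  obtain ⟨m, hm⟩ : ∃ m, c = m + 8 := ⟨c - 8, by omega⟩
  have := Nat.lt_two_pow_self (n := m)
  rw [hm, show m + 8 - 1 = m + 7 by omega, pow_add] at hlt
  omega

theorem stmt_17 :
    ∃ K : ℝ, 0 < K ∧ ∃ n₀ : ℕ, ∀ n : ℕ, n₀ ≤ n →
      ((((lyndonWords 2 n).filter fun w =>
            TwoEqualDisjointFactors (List.ofFn w)
              (3 * (Real.log n / Real.log 2))).card : ℝ)
          / ((lyndonWords 2 n).card : ℝ) ≤ K / n)
      ∧ (((Finset.univ.filter fun w : Fin n → Fin 2 =>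
            TwoEqualDisjointFactors (List.ofFn w)
              (3 * (Real.log n / Real.log 2))).card : ℝ)
          / 2 ^ n ≤ K / n) := by
  refine ⟨4, by norm_num, 129, fun n hn => ?_⟩
  set L := Nat.clog 2 (n ^ 3)
  have hL₀ : 0 < L := Nat.clog_pos one_lt_two (Nat.one_lt_pow (by norm_num) (by omega))
  have hpow : n ^ 3 ≤ Fintype.card (Fin 2) ^ L := by
    rw [Fintype.card_fin]
    exact Nat.le_pow_clog one_lt_two _
  have hLn : 4 * L ≤ n := four_mul_clog_two_pow_three_le (by omega)
  have hrep : ∀ w : Fin n → Fin 2, TwoEqualDisjointFactors (List.ofFn w)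
      (3 * (Real.log n / Real.log 2)) → HasDisjointRepeat L (List.ofFn w) := fun w h => by
    simpa only [natCeil_three_mul_log_div_log_two] using h.hasDisjointRepeat
  have hY : 0 < #(lyndonWords 2 n) := Nat.pos_of_mul_pos_left <|
    (Nat.two_pow_pos n).trans_le (pow_le_two_mul_card_isLyndon (α := Fin 2) le_rfl (by omega))
  have hn₀ : (0 : ℝ) < n := Nat.cast_pos.2 (by omega)
  constructor
  · rw [div_le_div_iff₀ (Nat.cast_pos.2 hY) hn₀, lyndonWords, filter_filter]
    have hsub : ({w | IsLyndon (List.ofFn w) ∧ TwoEqualDisjointFactors (List.ofFn w)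
          (3 * (Real.log n / Real.log 2))} : Finset (Fin n → Fin 2)) ⊆
        ({w | IsLyndon (List.ofFn w) ∧ HasDisjointRepeat L (List.ofFn w)} : Finset _) :=
      monotone_filter_right _ fun w _ hw => ⟨hw.1, hrep w hw.2⟩
    exact_mod_cast (Nat.mul_le_mul_right n (card_le_card hsub)).trans
      (card_isLyndon_hasDisjointRepeat_mul_le_four_mul le_rfl hL₀ hpow hLn)
  · rw [div_le_div_iff₀ (by positivity) hn₀]
    have hall := card_hasDisjointRepeat_mul_le hL₀ hpow
    rw [Fintype.card_fin] at hall
    exact_mod_cast (Nat.mul_le_mul_right n (card_le_card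
      (monotone_filter_right _ fun w _ => hrep w))).trans (hall.trans (by omega))
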